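/- (Refined Jensen-based single-sum inequality, Corollary) Let R ∈ ℝ^{n×n} be symmetric positive definite, a ≤ b integers, ℓ = b - a + 1, and u : ℤ[a,b] → ℝ^n. With υ₁, ζ₁, ζ₂ as in Lemma 3.1, one has ∑_{k=a}^{b} u_k^T R u_k ≥ (1/ℓ) υ₁^T R υ₁ + (1/ℓ)(3 ζ₁^T R ζ₁ + 5 ζ₂^T R ζ₂). -/

import Mathlib

/-!
The discrete Legendre polynomials `1`, `P₁`, `P₂` on `{a, …, b}` are orthogonal for the counting
measure, and `∑ₖ Pⱼ(k) uₖ` equals `υ₁`, `(ℓ + 1) ζ₁`, `(ℓ + 1)(ℓ + 2) ζ₂` respectively. Bessel's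
inequality for the semi-inner product `⟨f, g⟩ = ∑ₖ f_kᵀ R g_k` therefore bounds `∑ₖ u_kᵀ R u_k`
below by `υ₁ᵀRυ₁ / ℓ + 3(ℓ + 1)/(ℓ(ℓ - 1)) ζ₁ᵀRζ₁ + 5(ℓ + 1)(ℓ + 2)/(ℓ(ℓ - 1)(ℓ - 2)) ζ₂ᵀRζ₂`,
and these coefficients dominate `3/ℓ` and `5/ℓ`; for `ℓ ≤ 2` the missing terms have `ζⱼ = 0`.
-/

open Finset Matrix

theorem Finset.sum_Icc_smul_sum_Icc {α R M : Type*} [Preorder α] [LocallyFiniteOrder α]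
    [Semiring R] [AddCommMonoid M] [Module R M] (c : α → R) (f : α → M) (a b : α) :
    ∑ s ∈ Icc a b, c s • ∑ i ∈ Icc a s, f i = ∑ i ∈ Icc a b, (∑ s ∈ Icc i b, c s) • f i := by
  simp only [smul_sum, sum_smul]
  exact sum_comm' fun s i => by
    simp only [mem_Icc]
    exact ⟨fun ⟨⟨_, hsb⟩, hai, his⟩ => ⟨⟨his, hsb⟩, hai, his.trans hsb⟩,
      fun ⟨⟨his, hsb⟩, hai, _⟩ => ⟨⟨hai.trans his, hsb⟩, hai, his⟩⟩

section Orthogonality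

variable {ι J M : Type*} [Fintype J] [AddCommGroup M] [Module ℝ M]

theorem Finset.sum_smul_eq_zero_of_sum_sq_eq_zero {s : Finset ι} {p : ι → ℝ}
    (h : ∑ k ∈ s, p k ^ 2 = 0) (u : ι → M) : ∑ k ∈ s, p k • u k = 0 := by
  rw [sum_eq_zero_iff_of_nonneg fun _ _ => sq_nonneg _] at h
  exact sum_eq_zero fun k hk => by rw [pow_eq_zero_iff two_ne_zero |>.mp (h k hk), zero_smul]

theorem Finset.sum_smul_sum_smul_of_pairwise (s : Finset ι) (p : J → ι → ℝ)
    (horth : Pairwise fun j j' => ∑ k ∈ s, p j k * p j' k = 0) (v : J → M) (j : J) :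
    ∑ k ∈ s, p j k • ∑ j', p j' k • v j' = (∑ k ∈ s, p j k ^ 2) • v j := by
  classical
  simp only [smul_sum, smul_smul]
  rw [sum_comm]
  simp only [← sum_smul]
  rw [sum_eq_single j (fun j' _ hj' => by rw [horth (Ne.symm hj'), zero_smul]) (by simp)]
  simp only [sq]

namespace LinearMap.BilinForm

variable (B : LinearMap.BilinForm ℝ M)

theorem sum_apply_sum_smul (s : Finset ι) (p : J → ι → ℝ) (u : ι → M) (v : J → M) :
    ∑ k ∈ s, B (u k) (∑ j, p j k • v j) = ∑ j, B (∑ k ∈ s, p j k • u k) (v j) := by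
  simp only [map_sum, map_smul, LinearMap.sum_apply, LinearMap.smul_apply, smul_eq_mul]
  exact sum_comm

theorem sum_sum_smul_apply (s : Finset ι) (p : J → ι → ℝ) (u : ι → M) (v : J → M) :
    ∑ k ∈ s, B (∑ j, p j k • v j) (u k) = ∑ j, B (v j) (∑ k ∈ s, p j k • u k) := by
  simp only [map_sum, map_smul, LinearMap.sum_apply, LinearMap.smul_apply, smul_eq_mul]
  exact sum_comm

variable {B} (hB : ∀ x, 0 ≤ B x x)
include hB

/-- Bessel's inequality. A weight with `∑ k ∈ s, p j k ^ 2 = 0` contributes `0`, through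
`x / 0 = 0`. -/
theorem sum_apply_div_le_of_pairwise (s : Finset ι) (p : J → ι → ℝ)
    (horth : Pairwise fun j j' => ∑ k ∈ s, p j k * p j' k = 0) (u : ι → M) :
    ∑ j, B (∑ k ∈ s, p j k • u k) (∑ k ∈ s, p j k • u k) / ∑ k ∈ s, p j k ^ 2 ≤
      ∑ k ∈ s, B (u k) (u k) := by
  set w := fun j => ∑ k ∈ s, p j k • u k
  set N := fun j => ∑ k ∈ s, p j k ^ 2
  set v := fun j => (N j)⁻¹ • w j
  -- `y` is the projection of `u` onto the span of the weights
  set y := fun k => ∑ j, p j k • v j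
  have hyy : ∑ k ∈ s, B (y k) (y k) = ∑ j, B (v j) (N j • v j) := by
    rw [sum_sum_smul_apply B s p y v]
    exact sum_congr rfl fun j _ => by rw [sum_smul_sum_smul_of_pairwise s p horth]
  have hres : 0 ≤ ∑ k ∈ s, B (u k) (u k) - ∑ j, B (w j) (v j) - ∑ j, B (v j) (w j) +
      ∑ j, B (v j) (N j • v j) :=
    calc 0 ≤ ∑ k ∈ s, B (u k - y k) (u k - y k) := sum_nonneg fun k _ => hB _
      _ = _ := by
        simp only [map_sub, LinearMap.sub_apply, sum_sub_distrib, hyy]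
        simp only [y, sum_apply_sum_smul, sum_sum_smul_apply]
        ring
  have hwv : ∀ j, B (w j) (v j) = B (w j) (w j) / N j := fun j => by
    simp only [v, map_smul, smul_eq_mul, div_eq_inv_mul]
  have hvw : ∀ j, B (v j) (w j) = B (w j) (w j) / N j := fun j => by
    simp only [v, map_smul, LinearMap.smul_apply, smul_eq_mul, div_eq_inv_mul]
  have hvv : ∀ j, B (v j) (N j • v j) = B (w j) (w j) / N j := fun j => by
    rcases eq_or_ne (N j) 0 with h | h
    · simp [h]
    · simp only [v, map_smul, LinearMap.smul_apply, smul_eq_mul]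
      field_simp
  simp only [hwv, hvw, hvv] at hres
  linarith

theorem mul_apply_le_apply_sum_smul_div {s : Finset ι} {p : ι → ℝ} {u : ι → M} {ζ : M}
    {c κ : ℝ} (hc : c ≠ 0) (hw : ∑ k ∈ s, p k • u k = c • ζ)
    (hκ : κ * ∑ k ∈ s, p k ^ 2 ≤ c ^ 2) :
    κ * B ζ ζ ≤ B (∑ k ∈ s, p k • u k) (∑ k ∈ s, p k • u k) / ∑ k ∈ s, p k ^ 2 := by
  rw [hw, map_smul, map_smul, LinearMap.smul_apply, smul_eq_mul, smul_eq_mul]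
  rcases (sum_nonneg fun k _ => sq_nonneg (p k)).eq_or_lt with h | h
  · obtain rfl : ζ = 0 :=
      (smul_eq_zero.mp (hw ▸ sum_smul_eq_zero_of_sum_sq_eq_zero h.symm u)).resolve_left hc
    simp
  · rw [le_div_iff₀ h]
    nlinarith [hB ζ]

end LinearMap.BilinForm

end Orthogonality

/-- Faulhaber's formulas up to the fourth power, in `x = k - a` and `n = b - a`. -/
theorem sum_Icc_quartic {a b : ℤ} (hab : a ≤ b) (c₀ c₁ c₂ c₃ c₄ : ℝ) :
    ∑ k ∈ Icc a b, (c₀ + c₁ * (k - a) + c₂ * (k - a) ^ 2 + c₃ * (k - a) ^ 3 + c₄ * (k - a) ^ 4) =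
      c₀ * (b - a + 1) + c₁ * ((b - a) * (b - a + 1) / 2)
        + c₂ * ((b - a) * (b - a + 1) * (2 * (b - a) + 1) / 6)
        + c₃ * ((b - a) * (b - a + 1) / 2) ^ 2
        + c₄ * ((b - a) * (b - a + 1) * (2 * (b - a) + 1) * (3 * (b - a) ^ 2 + 3 * (b - a) - 1)
          / 30) := by
  induction b, hab using Int.leInduction with
  | base => simp
  | succ b hab ih =>
    rw [← insert_Icc_right_eq_Icc_add_one (by omega), sum_insert (by simp), ih]
    push_cast
    ring

theorem sum_Icc_one {a b : ℤ} (hab : a ≤ b) : ∑ _k ∈ Icc a b, (1 : ℝ) = b - a + 1 := by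
  simpa using sum_Icc_quartic hab 1 0 0 0 0

theorem sum_Icc_sub_add_one {a b : ℤ} (hab : a ≤ b) :
    ∑ k ∈ Icc a b, ((b : ℝ) - k + 1) = (b - a + 1) * (b - a + 2) / 2 :=
  (sum_congr rfl fun k _ => by ring).trans
    ((sum_Icc_quartic hab (b - a + 1) (-1) 0 0 0).trans (by ring))

section IteratedSums

variable {M : Type*} [AddCommGroup M] [Module ℝ M] (u : ℤ → M) (a b : ℤ)

theorem sum_Icc_sum_Icc_eq_sum_smul :
    ∑ k ∈ Icc a b, ∑ s ∈ Icc a k, u s = ∑ k ∈ Icc a b, ((b : ℝ) - k + 1) • u k := by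
  calc ∑ k ∈ Icc a b, ∑ s ∈ Icc a k, u s
      = ∑ k ∈ Icc a b, (1 : ℝ) • ∑ s ∈ Icc a k, u s := by simp only [one_smul]
    _ = _ := by
      rw [sum_Icc_smul_sum_Icc]
      exact sum_congr rfl fun k hk => by rw [sum_Icc_one (mem_Icc.mp hk).2]

theorem sum_Icc_sum_Icc_sum_Icc_eq_sum_smul :
    ∑ k ∈ Icc a b, ∑ s ∈ Icc a k, ∑ i ∈ Icc a s, u i =
      ∑ k ∈ Icc a b, (((b : ℝ) - k + 1) * (b - k + 2) / 2) • u k := by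
  rw [sum_Icc_sum_Icc_eq_sum_smul, sum_Icc_smul_sum_Icc]
  exact sum_congr rfl fun k hk => by rw [sum_Icc_sub_add_one (mem_Icc.mp hk).2]

end IteratedSums

/-! The discrete Legendre polynomials of degree one and two on `{a, …, b}`: in `x = k - a` and
`n = b - a` they read `2x - n` and `6x² - 6nx + n(n - 1)`. -/

def legendre₁ (a b k : ℤ) : ℝ := 2 * k - a - b

def legendre₂ (a b k : ℤ) : ℝ := 6 * (k - a) * (k - b) + (b - a) * (b - a - 1)

section Legendre

variable {a b : ℤ} (hab : a ≤ b)
include hab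

theorem sum_legendre₁ : ∑ k ∈ Icc a b, legendre₁ a b k = 0 :=
  (sum_congr rfl fun k _ => by rw [legendre₁]; ring).trans
    ((sum_Icc_quartic hab (-(b - a)) 2 0 0 0).trans (by ring))

theorem sum_legendre₂ : ∑ k ∈ Icc a b, legendre₂ a b k = 0 :=
  (sum_congr rfl fun k _ => by rw [legendre₂]; ring).trans
    ((sum_Icc_quartic hab ((b - a) * (b - a - 1)) (-6 * (b - a)) 6 0 0).trans (by ring))

theorem sum_legendre₁_mul_legendre₂ : ∑ k ∈ Icc a b, legendre₁ a b k * legendre₂ a b k = 0 :=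
  (sum_congr rfl fun k _ => by rw [legendre₁, legendre₂]; ring).trans
    ((sum_Icc_quartic hab (-(b - a) ^ 2 * (b - a - 1)) (8 * (b - a) ^ 2 - 2 * (b - a))
      (-18 * (b - a)) 12 0).trans (by ring))

theorem sum_legendre₁_sq :
    ∑ k ∈ Icc a b, legendre₁ a b k ^ 2 = (b - a + 1) * ((b - a + 1) ^ 2 - 1) / 3 :=
  (sum_congr rfl fun k _ => by rw [legendre₁]; ring).trans
    ((sum_Icc_quartic hab ((b - a) ^ 2) (-4 * (b - a)) 4 0 0).trans (by ring))

theorem sum_legendre₂_sq :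
    ∑ k ∈ Icc a b, legendre₂ a b k ^ 2 =
      (b - a + 1) * ((b - a + 1) ^ 2 - 1) * ((b - a + 1) ^ 2 - 4) / 5 :=
  (sum_congr rfl fun k _ => by rw [legendre₂]; ring).trans
    ((sum_Icc_quartic hab ((b - a) ^ 2 * (b - a - 1) ^ 2) (-12 * (b - a) ^ 2 * (b - a - 1))
      (48 * (b - a) ^ 2 - 12 * (b - a)) (-72 * (b - a)) 36).trans (by ring))

variable {ℓ : ℝ} (hℓ : ℓ = b - a + 1)
include hℓ

theorem one_le_of_eq_sub_add_one : 1 ≤ ℓ := by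
  rw [hℓ]
  linarith [(Int.cast_le (R := ℝ)).mpr hab]

theorem sum_legendre₁_smul {M : Type*} [AddCommGroup M] [Module ℝ M] (u : ℤ → M) :
    ∑ k ∈ Icc a b, legendre₁ a b k • u k =
      (ℓ + 1) • (∑ k ∈ Icc a b, u k - (2 / (ℓ + 1)) • ∑ k ∈ Icc a b, ∑ s ∈ Icc a k, u s) := by
  have : ℓ + 1 ≠ 0 := by linarith [one_le_of_eq_sub_add_one hab hℓ]
  subst hℓ
  rw [sum_Icc_sum_Icc_eq_sum_smul, smul_sum, smul_sub, smul_sum, smul_sum, ← sum_sub_distrib]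
  refine sum_congr rfl fun k _ => ?_
  rw [legendre₁]
  match_scalars
  field_simp
  ring

theorem sum_legendre₂_smul {M : Type*} [AddCommGroup M] [Module ℝ M] (u : ℤ → M) :
    ∑ k ∈ Icc a b, legendre₂ a b k • u k =
      ((ℓ + 1) * (ℓ + 2)) • (∑ k ∈ Icc a b, u k
        - (6 / (ℓ + 1)) • ∑ k ∈ Icc a b, ∑ s ∈ Icc a k, u s
        + (12 / ((ℓ + 1) * (ℓ + 2))) • ∑ k ∈ Icc a b, ∑ s ∈ Icc a k, ∑ i ∈ Icc a s, u i) := by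
  have : ℓ + 1 ≠ 0 := by linarith [one_le_of_eq_sub_add_one hab hℓ]
  have : ℓ + 2 ≠ 0 := by linarith [one_le_of_eq_sub_add_one hab hℓ]
  subst hℓ
  rw [sum_Icc_sum_Icc_eq_sum_smul, sum_Icc_sum_Icc_sum_Icc_eq_sum_smul, smul_sum, smul_add,
    smul_sub, smul_sum, smul_sum, smul_sum, smul_sum, ← sum_sub_distrib, ← sum_add_distrib]
  refine sum_congr rfl fun k _ => ?_
  rw [legendre₂]
  match_scalars
  field_simp
  ring

theorem three_div_mul_sum_legendre₁_sq_le :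
    3 / ℓ * ∑ k ∈ Icc a b, legendre₁ a b k ^ 2 ≤ (ℓ + 1) ^ 2 := by
  have : 0 < ℓ := by linarith [one_le_of_eq_sub_add_one hab hℓ]
  rw [sum_legendre₁_sq hab, ← hℓ]
  field_simp
  nlinarith

theorem five_div_mul_sum_legendre₂_sq_le :
    5 / ℓ * ∑ k ∈ Icc a b, legendre₂ a b k ^ 2 ≤ ((ℓ + 1) * (ℓ + 2)) ^ 2 := by
  have : 0 < ℓ := by linarith [one_le_of_eq_sub_add_one hab hℓ]
  rw [sum_legendre₂_sq hab, ← hℓ]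
  field_simp
  nlinarith [mul_pos (mul_pos this (by linarith : 0 < ℓ + 1)) (by linarith : 0 < ℓ + 2)]

end Legendre

theorem LinearMap.BilinForm.legendre_bessel {M : Type*} [AddCommGroup M] [Module ℝ M]
    {B : LinearMap.BilinForm ℝ M} (hB : ∀ x, 0 ≤ B x x) {a b : ℤ} (hab : a ≤ b) (u : ℤ → M) :
    B (∑ k ∈ Icc a b, u k) (∑ k ∈ Icc a b, u k) / (b - a + 1)
      + B (∑ k ∈ Icc a b, legendre₁ a b k • u k) (∑ k ∈ Icc a b, legendre₁ a b k • u k)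
        / ∑ k ∈ Icc a b, legendre₁ a b k ^ 2
      + B (∑ k ∈ Icc a b, legendre₂ a b k • u k) (∑ k ∈ Icc a b, legendre₂ a b k • u k)
        / ∑ k ∈ Icc a b, legendre₂ a b k ^ 2 ≤
      ∑ k ∈ Icc a b, B (u k) (u k) := by
  have horth : Pairwise fun i j =>
      ∑ k ∈ Icc a b, ![fun _ => 1, legendre₁ a b, legendre₂ a b] i k *
        ![fun _ => 1, legendre₁ a b, legendre₂ a b] j k = 0 := by
    intro i j hij
    fin_cases i <;> fin_cases j <;> simp at hij ⊢ <;>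
      simp [sum_legendre₁ hab, sum_legendre₂ hab, sum_legendre₁_mul_legendre₂ hab, mul_comm]
  have h := sum_apply_div_le_of_pairwise hB (Icc a b) _ horth u
  simpa only [Fin.sum_univ_three, Matrix.cons_val_zero, Matrix.cons_val_one, Matrix.cons_val_two,
    Matrix.head_cons, Matrix.tail_cons, one_smul, one_pow, sum_Icc_one hab] using h

theorem refined_jensen_single_corollary_general
    (n : ℕ) (R : Matrix (Fin n) (Fin n) ℝ) (hR : R.PosDef)
    (a b : ℤ) (hab : a ≤ b) (u : ℤ → (Fin n → ℝ)) :
    ∀ (ℓ : ℝ), ℓ = (b : ℝ) - a + 1 →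
    ∀ (υ₁ υ₂ υ₃ ζ₁ ζ₂ : Fin n → ℝ),
      υ₁ = ∑ k ∈ Finset.Icc a b, u k →
      υ₂ = ∑ k ∈ Finset.Icc a b, ∑ s ∈ Finset.Icc a k, u s →
      υ₃ = ∑ k ∈ Finset.Icc a b, ∑ s ∈ Finset.Icc a k, ∑ i ∈ Finset.Icc a s, u i →
      ζ₁ = υ₁ - (2 / (ℓ + 1)) • υ₂ →
      ζ₂ = υ₁ - (6 / (ℓ + 1)) • υ₂ + (12 / ((ℓ + 1) * (ℓ + 2))) • υ₃ →
      ∑ k ∈ Finset.Icc a b, (u k) ⬝ᵥ R.mulVec (u k) ≥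
        (1 / ℓ) * (υ₁ ⬝ᵥ R.mulVec υ₁) +
          (1 / ℓ) * (3 * (ζ₁ ⬝ᵥ R.mulVec ζ₁) + 5 * (ζ₂ ⬝ᵥ R.mulVec ζ₂)) := by
  intro ℓ hℓ υ₁ υ₂ υ₃ ζ₁ ζ₂ hυ₁ hυ₂ hυ₃ hζ₁ hζ₂
  have hℓ₁ := one_le_of_eq_sub_add_one hab hℓ
  set B := Matrix.toBilin' R
  have hB : ∀ x, 0 ≤ B x x := fun x => by
    simpa [B, Matrix.toBilin'_apply'] using hR.posSemidef.dotProduct_mulVec_nonneg x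
  have bessel := B.legendre_bessel hB hab u
  have h₁ := B.mul_apply_le_apply_sum_smul_div hB (by linarith)
    (by rw [sum_legendre₁_smul hab hℓ, ← hυ₁, ← hυ₂, ← hζ₁])
    (three_div_mul_sum_legendre₁_sq_le hab hℓ)
  have h₂ := B.mul_apply_le_apply_sum_smul_div hB (by positivity)
    (by rw [sum_legendre₂_smul hab hℓ, ← hυ₁, ← hυ₂, ← hυ₃, ← hζ₂])
    (five_div_mul_sum_legendre₂_sq_le hab hℓ)
  rw [← hυ₁, ← hℓ] at bessel
  simp only [B, Matrix.toBilin'_apply'] at bessel h₁ h₂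
  calc 1 / ℓ * (υ₁ ⬝ᵥ R *ᵥ υ₁) + 1 / ℓ * (3 * (ζ₁ ⬝ᵥ R *ᵥ ζ₁) + 5 * (ζ₂ ⬝ᵥ R *ᵥ ζ₂))
      = υ₁ ⬝ᵥ R *ᵥ υ₁ / ℓ + 3 / ℓ * (ζ₁ ⬝ᵥ R *ᵥ ζ₁) + 5 / ℓ * (ζ₂ ⬝ᵥ R *ᵥ ζ₂) := by ring
    _ ≤ _ := by linarith

theorem refined_jensen_single_corollary
    (n : ℕ) (R : Matrix (Fin n) (Fin n) ℝ) (hR : R.PosDef) (hRsym : R.IsSymm)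
    (a b : ℤ) (hab : a ≤ b) (u : ℤ → (Fin n → ℝ)) :
    ∀ (ℓ : ℝ), ℓ = (b : ℝ) - a + 1 →
    ∀ (υ₁ υ₂ υ₃ ζ₁ ζ₂ : Fin n → ℝ),
      υ₁ = ∑ k ∈ Finset.Icc a b, u k →
      υ₂ = ∑ k ∈ Finset.Icc a b, ∑ s ∈ Finset.Icc a k, u s →
      υ₃ = ∑ k ∈ Finset.Icc a b, ∑ s ∈ Finset.Icc a k, ∑ i ∈ Finset.Icc a s, u i →
      ζ₁ = υ₁ - (2 / (ℓ + 1)) • υ₂ →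
      ζ₂ = υ₁ - (6 / (ℓ + 1)) • υ₂ + (12 / ((ℓ + 1) * (ℓ + 2))) • υ₃ →
      ∑ k ∈ Finset.Icc a b, (u k) ⬝ᵥ R.mulVec (u k) ≥
        (1 / ℓ) * (υ₁ ⬝ᵥ R.mulVec υ₁) +
          (1 / ℓ) * (3 * (ζ₁ ⬝ᵥ R.mulVec ζ₁) + 5 * (ζ₂ ⬝ᵥ R.mulVec ζ₂)) :=
  refined_jensen_single_corollary_general n R hR a b hab u
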